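/- arXiv:2304.04857 — 5 statements merged into one kernel-verified Lean document; each statement's English description precedes it below -/
import Mathlib

section
/- Let n ≥ 1, let f be structure constants, and let γ : ℝ^n → Mat_n(ℝ) be continuously differentiable such that: (a) γ satisfies the first master equation Σ_i (γ^j_i(A) ∂γ^k_l/∂A_i(A) − γ^k_i(A) ∂γ^j_l/∂A_i(A)) = Σ_i γ^i_l(A) f^{jk}_i for all A ∈ ℝ^n and all indices j,k,l; (b) for all A and all indices d,e,q: Σ_j (M(A)^d_j ∂γ^e_q/∂A_j(A) − M(A)^e_j ∂γ^d_q/∂A_j(A)) = Σ_j (γ^e_j(A) f^{jd}_q − γ^d_j(A) f^{je}_q + 2 f^{de}_j γ^j_q(A)); (c) the matrix γ(A) − M(A) is invertible for every A. Define ρ(A) := (γ(A) − M(A))^{−1}. Then for every A ∈ ℝ^n and all indices b,d,e one has B_b^{de}(A) = f^{de}_b. -/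
set_option autoImplicit false

open scoped BigOperators

/-- Partial derivative `∂_a u (x)` of `u : ℝⁿ → ℝ`. -/
noncomputable def pd {n : ℕ} (a : Fin n) (u : (Fin n → ℝ) → ℝ) (x : Fin n → ℝ) : ℝ :=
  fderiv ℝ u x (Pi.single a 1)

section pdlemmas
variable {n : ℕ} {a : Fin n} {u v : (Fin n → ℝ) → ℝ} {x : Fin n → ℝ}

lemma pd_const (c : ℝ) : pd a (fun _ => c) x = 0 := by
  simp [pd]

lemma pd_sub (hu : DifferentiableAt ℝ u x) (hv : DifferentiableAt ℝ v x) :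
    pd a (fun A => u A - v A) x = pd a u x - pd a v x := by
  simp [pd, fderiv_fun_sub hu hv]

lemma pd_mul (hu : DifferentiableAt ℝ u x) (hv : DifferentiableAt ℝ v x) :
    pd a (fun A => u A * v A) x = pd a u x * v x + u x * pd a v x := by
  simp only [pd, fderiv_fun_mul hu hv, ContinuousLinearMap.add_apply,
    ContinuousLinearMap.smul_apply, smul_eq_mul]
  ring

lemma pd_sum {ι : Type*} (s : Finset ι) (u : ι → (Fin n → ℝ) → ℝ)
    (h : ∀ i ∈ s, DifferentiableAt ℝ (u i) x) :
    pd a (fun A => ∑ i ∈ s, u i A) x = ∑ i ∈ s, pd a (u i) x := by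
  simp [pd, fderiv_fun_sum h]

lemma pd_eval (i : Fin n) : pd a (fun A => A i) x = (Pi.single a 1 : Fin n → ℝ) i := by
  have : (fun A : Fin n → ℝ => A i)
      = (ContinuousLinearMap.proj i : (Fin n → ℝ) →L[ℝ] ℝ) := rfl
  rw [pd, this, ContinuousLinearMap.fderiv]
  rfl

end pdlemmas

section diff
variable {n : ℕ}

lemma diffAt_finset_prod {ι : Type*} [DecidableEq ι] (s : Finset ι)
    (u : ι → (Fin n → ℝ) → ℝ) {x : Fin n → ℝ}
    (h : ∀ i ∈ s, DifferentiableAt ℝ (u i) x) :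
    DifferentiableAt ℝ (fun A => ∏ i ∈ s, u i A) x := by
  classical
  induction s using Finset.cons_induction with
  | empty => simpa using differentiableAt_const (1:ℝ)
  | cons a s ha ih =>
    simp only [Finset.prod_cons]
    exact (h a (Finset.mem_cons_self a s)).mul
      (ih fun i hi => h i (Finset.mem_cons_of_mem hi))

lemma diffAt_det (S : (Fin n → ℝ) → Matrix (Fin n) (Fin n) ℝ) {x : Fin n → ℝ}
    (h : ∀ p q, DifferentiableAt ℝ (fun A => S A p q) x) :
    DifferentiableAt ℝ (fun A => (S A).det) x := by
  simp only [Matrix.det_apply']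
  exact DifferentiableAt.fun_sum fun σ _ =>
    ((diffAt_finset_prod Finset.univ (fun i A => S A (σ i) i)
      (fun i _ => h (σ i) i)).const_mul _)

lemma diffAt_adjugate (S : (Fin n → ℝ) → Matrix (Fin n) (Fin n) ℝ) {x : Fin n → ℝ}
    (h : ∀ p q, DifferentiableAt ℝ (fun A => S A p q) x) (m b : Fin n) :
    DifferentiableAt ℝ (fun A => (S A).adjugate m b) x := by
  simp only [Matrix.adjugate_apply]
  apply diffAt_det (fun A => (S A).updateRow b (Pi.single m 1))
  intro p q
  by_cases hp : p = b
  · subst hp; simp only [Matrix.updateRow_self]; exact differentiableAt_const _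
  · simp only [Matrix.updateRow_ne hp]; exact h p q

lemma diffAt_inv_entry (S : (Fin n → ℝ) → Matrix (Fin n) (Fin n) ℝ) {x : Fin n → ℝ}
    (h : ∀ p q, DifferentiableAt ℝ (fun A => S A p q) x)
    (hdet : (S x).det ≠ 0) (m b : Fin n) :
    DifferentiableAt ℝ (fun A => (S A)⁻¹ m b) x := by
  have : (fun A => (S A)⁻¹ m b)
      = fun A => Ring.inverse (S A).det * (S A).adjugate m b := by
    funext A
    rw [Matrix.inv_def]
    simp [Matrix.smul_apply]
  rw [this]
  have : (fun A => Ring.inverse (S A).det * (S A).adjugate m b)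
      = fun A => ((S A).det)⁻¹ * (S A).adjugate m b := by
    funext A; rw [Ring.inverse_eq_inv']
  rw [this]
  exact ((diffAt_det S h).inv hdet).mul (diffAt_adjugate S h m b)

end diff

section inv
variable {n : ℕ}

lemma pd_inv_entry (S : (Fin n → ℝ) → Matrix (Fin n) (Fin n) ℝ) (x : Fin n → ℝ)
    (hdiff : ∀ p q, ∀ y, DifferentiableAt ℝ (fun A => S A p q) y)
    (hdet : ∀ A, IsUnit (S A).det) (j m b : Fin n) :
    pd j (fun A => (S A)⁻¹ m b) x
      = -∑ p, ∑ q, (S x)⁻¹ m p * pd j (fun A => S A p q) x * (S x)⁻¹ q b := by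
  have hdet' : ∀ A, (S A).det ≠ 0 := fun A => (hdet A).ne_zero
  have hρdiff : ∀ m b, ∀ y, DifferentiableAt ℝ (fun A => (S A)⁻¹ m b) y :=
    fun m b y => diffAt_inv_entry S (fun p q => hdiff p q y) (hdet' y) m b
  -- the product ρ * S is the constant 1
  have hconst : ∀ c : Fin n, (fun A => ∑ p, (S A)⁻¹ m p * S A p c)
      = fun _ => ((1 : Matrix (Fin n) (Fin n) ℝ) m c) := by
    intro c; funext A
    rw [← Matrix.mul_apply, Matrix.nonsing_inv_mul (S A) (hdet A)]
  have hkey : ∀ c : Fin n,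
      ∑ p, (pd j (fun A => (S A)⁻¹ m p) x * S x p c
        + (S x)⁻¹ m p * pd j (fun A => S A p c) x) = 0 := by
    intro c
    have h0 : pd j (fun A => ∑ p, (S A)⁻¹ m p * S A p c) x = 0 := by
      rw [hconst c, pd_const]
    rw [pd_sum Finset.univ (fun p A => (S A)⁻¹ m p * S A p c) (fun p _ => ((hρdiff m p x).mul (hdiff p c x)))] at h0
    rw [← h0]
    exact Finset.sum_congr rfl fun p _ => (pd_mul (hρdiff m p x) (hdiff p c x)).symm
  -- resolve
  have hSρ : ∀ p c : Fin n, ∑ q, S x p q * (S x)⁻¹ q c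
      = ((1 : Matrix (Fin n) (Fin n) ℝ) p c) := by
    intro p c
    rw [← Matrix.mul_apply, Matrix.mul_nonsing_inv (S x) (hdet x)]
  calc pd j (fun A => (S A)⁻¹ m b) x
      = ∑ p, pd j (fun A => (S A)⁻¹ m p) x * ((1 : Matrix (Fin n) (Fin n) ℝ) p b) := by
        simp [Matrix.one_apply]
    _ = ∑ p, pd j (fun A => (S A)⁻¹ m p) x * (∑ c, S x p c * (S x)⁻¹ c b) := by
        simp_rw [hSρ]
    _ = ∑ c, (∑ p, pd j (fun A => (S A)⁻¹ m p) x * S x p c) * (S x)⁻¹ c b := by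
        simp_rw [Finset.mul_sum, Finset.sum_mul]
        rw [Finset.sum_comm]
        simp [mul_assoc]
    _ = ∑ c, (-∑ p, (S x)⁻¹ m p * pd j (fun A => S A p c) x) * (S x)⁻¹ c b := by
        refine Finset.sum_congr rfl fun c _ => ?_
        congr 1
        have := hkey c
        rw [Finset.sum_add_distrib] at this
        linarith
    _ = -∑ p, ∑ q, (S x)⁻¹ m p * pd j (fun A => S A p q) x * (S x)⁻¹ q b := by
        simp_rw [neg_mul, Finset.sum_neg_distrib, Finset.sum_mul]
        rw [Finset.sum_comm]

end inv


/-- Structure constants: antisymmetry and Jacobi identity. -/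
def IsStructureConstants {n : ℕ} (f : Fin n → Fin n → Fin n → ℝ) : Prop :=
  (∀ a b c, f a b c = - f b a c) ∧
  (∀ i j k a, ∑ l, (f k l i * f j a l + f j l i * f a k l + f a l i * f k j l) = 0)

/-- The matrix `M(A)` with entries `M(A)^s_l = Σ_i f^{is}_l A_i` (upper index = row). -/
def Mmat {n : ℕ} (f : Fin n → Fin n → Fin n → ℝ) (A : Fin n → ℝ) :
    Matrix (Fin n) (Fin n) ℝ := fun s l => ∑ i, f i s l * A i

section mmat
variable {n : ℕ}

lemma diffAt_Mmat (f : Fin n → Fin n → Fin n → ℝ) (s l : Fin n) (x : Fin n → ℝ) :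
    DifferentiableAt ℝ (fun A => Mmat f A s l) x := by
  unfold Mmat
  exact DifferentiableAt.fun_sum fun i _ =>
    ((ContinuousLinearMap.proj i : (Fin n → ℝ) →L[ℝ] ℝ).differentiableAt).const_mul _

lemma pd_Mmat (f : Fin n → Fin n → Fin n → ℝ) (j s l : Fin n) (x : Fin n → ℝ) :
    pd j (fun A => Mmat f A s l) x = f j s l := by
  unfold Mmat
  rw [pd_sum Finset.univ (fun i A => f i s l * A i) (fun i _ =>
    ((ContinuousLinearMap.proj i : (Fin n → ℝ) →L[ℝ] ℝ).differentiableAt).const_mul _)]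
  have : ∀ i : Fin n, pd j (fun A => f i s l * A i) x
      = f i s l * (Pi.single j 1 : Fin n → ℝ) i := by
    intro i
    rw [pd_mul (u := fun _ => f i s l) (v := fun A => A i) (differentiableAt_const _)
      ((ContinuousLinearMap.proj i : (Fin n → ℝ) →L[ℝ] ℝ).differentiableAt),
      pd_const, pd_eval]
    ring
  simp_rw [this, Pi.single_apply]
  simp

lemma collapse1 (SA ρA : Matrix (Fin n) (Fin n) ℝ)
    (hinv : ∀ x y : Fin n, ∑ m, SA x m * ρA m y = if x = y then (1:ℝ) else 0)
    (D : Fin n → Fin n → ℝ) (e b : Fin n) :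
    ∑ m, ∑ p, ∑ q, SA e m * (ρA m p * D p q * ρA q b) = ∑ q, D e q * ρA q b := by
  rw [Finset.sum_comm]
  have : ∀ p, ∑ m, ∑ q, SA e m * (ρA m p * D p q * ρA q b)
      = (if e = p then (1:ℝ) else 0) * ∑ q, D p q * ρA q b := by
    intro p
    calc ∑ m, ∑ q, SA e m * (ρA m p * D p q * ρA q b)
        = ∑ m, (SA e m * ρA m p) * ∑ q, D p q * ρA q b := by
          refine Finset.sum_congr rfl fun m _ => ?_
          rw [Finset.mul_sum]
          exact Finset.sum_congr rfl fun q _ => by ring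
      _ = (∑ m, SA e m * ρA m p) * ∑ q, D p q * ρA q b := (Finset.sum_mul _ _ _).symm
      _ = (if e = p then (1:ℝ) else 0) * ∑ q, D p q * ρA q b := by rw [hinv]
  simp_rw [this, ite_mul, one_mul, zero_mul]
  simp
end mmat


/-- `B_b^{de}(A) = Σ_{j,m} (ρ(A)⁻¹)^d_j (∂_{A_j} ρ^m_b − ∂_{A_m} ρ^j_b)(A) (ρ(A)⁻¹)^e_m`. -/
noncomputable def Bq {n : ℕ} (ρ : (Fin n → ℝ) → Matrix (Fin n) (Fin n) ℝ)
    (b d e : Fin n) (A : Fin n → ℝ) : ℝ :=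
  ∑ j, ∑ m, (ρ A)⁻¹ d j *
    (pd j (fun B => ρ B m b) A - pd m (fun B => ρ B j b) A) * (ρ A)⁻¹ e m

theorem stmt0 {n : ℕ} (hn : 1 ≤ n) (f : Fin n → Fin n → Fin n → ℝ)
    (hf : IsStructureConstants f)
    (γ : (Fin n → ℝ) → Matrix (Fin n) (Fin n) ℝ)
    (hγ : ∀ j l, ContDiff ℝ 1 (fun A => γ A j l))
    (ha : ∀ (A : Fin n → ℝ) (j k l : Fin n),
      ∑ i, (γ A j i * pd i (fun B => γ B k l) A - γ A k i * pd i (fun B => γ B j l) A)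
        = ∑ i, γ A i l * f j k i)
    (hb : ∀ (A : Fin n → ℝ) (d e q : Fin n),
      ∑ j, (Mmat f A d j * pd j (fun B => γ B e q) A
            - Mmat f A e j * pd j (fun B => γ B d q) A)
        = ∑ j, (γ A e j * f j d q - γ A d j * f j e q + 2 * f d e j * γ A j q))
    (hc : ∀ A : Fin n → ℝ, IsUnit (γ A - Mmat f A))
    (ρ : (Fin n → ℝ) → Matrix (Fin n) (Fin n) ℝ)
    (hρ : ∀ A, ρ A = (γ A - Mmat f A)⁻¹) :
    ∀ (A : Fin n → ℝ) (b d e : Fin n), Bq ρ b d e A = f d e b := by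
  classical
  intro A b d e
  set S : (Fin n → ℝ) → Matrix (Fin n) (Fin n) ℝ := fun B => γ B - Mmat f B with hSdef
  have hdet : ∀ B, IsUnit (S B).det := fun B => (Matrix.isUnit_iff_isUnit_det _).mp (hc B)
  have hSentry : ∀ (B : Fin n → ℝ) (p q : Fin n), S B p q = γ B p q - Mmat f B p q :=
    fun B p q => rfl
  have hSdiff : ∀ (p q : Fin n) (y : Fin n → ℝ), DifferentiableAt ℝ (fun B => S B p q) y := by
    intro p q y
    have h : (fun B => S B p q) = fun B => γ B p q - Mmat f B p q := rfl
    rw [h]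
    exact (((hγ p q).differentiable one_ne_zero) y).sub (diffAt_Mmat f p q y)
  set R : Matrix (Fin n) (Fin n) ℝ := (S A)⁻¹ with hRdef
  have hρinv : (ρ A)⁻¹ = S A := by
    rw [hρ A]; exact Matrix.nonsing_inv_nonsing_inv _ (hdet A)
  have h1 : ∀ x y : Fin n, ∑ m, S A x m * R m y = if x = y then (1:ℝ) else 0 := by
    intro x y
    rw [hRdef, ← Matrix.mul_apply, Matrix.mul_nonsing_inv _ (hdet A), Matrix.one_apply]
  set D : Fin n → Fin n → Fin n → ℝ := fun j p q => pd j (fun B => S B p q) A with hDdef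
  have pdρ : ∀ j m : Fin n, pd j (fun B => ρ B m b) A
      = -∑ p, ∑ q, R m p * D j p q * R q b := by
    intro j m
    have h : (fun B => ρ B m b) = fun B => (S B)⁻¹ m b := by
      funext B; rw [hρ B]
    rw [h]
    exact pd_inv_entry S A hSdiff hdet j m b
  have pdD : ∀ j p q : Fin n, D j p q = pd j (fun B => γ B p q) A - f j p q := by
    intro j p q
    have h : (fun B => S B p q) = fun B => γ B p q - Mmat f B p q := rfl
    rw [hDdef]
    show pd j (fun B => S B p q) A = _
    rw [h, pd_sub (((hγ p q).differentiable one_ne_zero) A) (diffAt_Mmat f p q A), pd_Mmat]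
  -- the key algebraic identity
  have hkey : ∀ q : Fin n, ∑ j, (S A d j * D j e q - S A e j * D j d q)
      = -∑ i, f d e i * S A i q := by
    intro q
    have e1 := ha A d e q
    have e2 := hb A d e q
    have jac : ∀ i, ∑ j, (f i d j * f j e q - f i e j * f j d q - f d e j * f i j q) = 0 := by
      intro i
      have h := hf.2 q i e d
      have hpt : ∀ l : Fin n, f i d l * f l e q - f i e l * f l d q - f d e l * f i l q
          = -(f e l q * f i d l + f i l q * f d e l + f d l q * f e i l) := by
        intro l
        have h1 := hf.1 l e q
        have h2 := hf.1 i e l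
        have h3 := hf.1 l d q
        rw [h1, h2, h3]; ring
      rw [Finset.sum_congr rfl fun l _ => hpt l, Finset.sum_neg_distrib, h, neg_zero]
    have e3 : ∑ j, (Mmat f A d j * f j e q - Mmat f A e j * f j d q
        - f d e j * Mmat f A j q) = 0 := by
      have expand : ∀ j : Fin n, Mmat f A d j * f j e q - Mmat f A e j * f j d q
          - f d e j * Mmat f A j q
          = ∑ i, (f i d j * f j e q - f i e j * f j d q - f d e j * f i j q) * A i := by
        intro j
        simp only [Mmat, Finset.sum_mul, Finset.mul_sum, ← Finset.sum_sub_distrib]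
        exact Finset.sum_congr rfl fun i _ => by ring
      rw [Finset.sum_congr rfl fun j _ => expand j, Finset.sum_comm]
      have h4 : ∀ i, ∑ j, (f i d j * f j e q - f i e j * f j d q - f d e j * f i j q) * A i
          = (∑ j, (f i d j * f j e q - f i e j * f j d q - f d e j * f i j q)) * A i :=
        fun i => (Finset.sum_mul _ _ _).symm
      rw [Finset.sum_congr rfl fun i _ => h4 i]
      simp [jac]
    have E1 : ∑ j, (γ A d j * pd j (fun B => γ B e q) A
        - γ A e j * pd j (fun B => γ B d q) A - γ A j q * f d e j) = 0 := by
      rw [Finset.sum_sub_distrib, e1, sub_self]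
    have E2 : ∑ j, (Mmat f A d j * pd j (fun B => γ B e q) A
        - Mmat f A e j * pd j (fun B => γ B d q) A
        - (γ A e j * f j d q - γ A d j * f j e q + 2 * f d e j * γ A j q)) = 0 := by
      rw [Finset.sum_sub_distrib, e2, sub_self]
    have main : ∑ j, (S A d j * D j e q - S A e j * D j d q + f d e j * S A j q) = 0 := by
      have ptwise : ∀ j : Fin n, S A d j * D j e q - S A e j * D j d q + f d e j * S A j q
          = (γ A d j * pd j (fun B => γ B e q) A
              - γ A e j * pd j (fun B => γ B d q) A - γ A j q * f d e j)
            - (Mmat f A d j * pd j (fun B => γ B e q) A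
              - Mmat f A e j * pd j (fun B => γ B d q) A
              - (γ A e j * f j d q - γ A d j * f j e q + 2 * f d e j * γ A j q))
            + (Mmat f A d j * f j e q - Mmat f A e j * f j d q
              - f d e j * Mmat f A j q) := by
        intro j
        rw [hSentry, hSentry, hSentry, pdD, pdD]
        ring
      rw [Finset.sum_congr rfl fun j _ => ptwise j, Finset.sum_add_distrib,
        Finset.sum_sub_distrib, E1, E2, e3]
      ring
    rw [Finset.sum_add_distrib] at main
    linarith
  -- final computation
  simp only [Bq, hρinv]
  have split : ∑ j, ∑ m, S A d j
        * (pd j (fun B => ρ B m b) A - pd m (fun B => ρ B j b) A) * S A e m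
      = (∑ j, ∑ m, S A d j * pd j (fun B => ρ B m b) A * S A e m)
        - (∑ j, ∑ m, S A d j * pd m (fun B => ρ B j b) A * S A e m) := by
    rw [← Finset.sum_sub_distrib]
    refine Finset.sum_congr rfl fun j _ => ?_
    rw [← Finset.sum_sub_distrib]
    exact Finset.sum_congr rfl fun m _ => by ring
  have T1 : ∑ j, ∑ m, S A d j * pd j (fun B => ρ B m b) A * S A e m
      = -∑ j, ∑ q, S A d j * (D j e q * R q b) := by
    rw [← Finset.sum_neg_distrib]
    refine Finset.sum_congr rfl fun j _ => ?_
    calc ∑ m, S A d j * pd j (fun B => ρ B m b) A * S A e m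
        = ∑ m, -(S A d j * (S A e m * (∑ p, ∑ q, R m p * D j p q * R q b))) := by
          refine Finset.sum_congr rfl fun m _ => ?_
          rw [pdρ j m]; ring
      _ = -(S A d j * ∑ m, (S A e m * (∑ p, ∑ q, R m p * D j p q * R q b))) := by
          rw [Finset.sum_neg_distrib, Finset.mul_sum]
      _ = -(S A d j * (∑ m, ∑ p, ∑ q, S A e m * (R m p * D j p q * R q b))) := by
          congr 1; congr 1
          refine Finset.sum_congr rfl fun m _ => ?_
          rw [Finset.mul_sum]
          refine Finset.sum_congr rfl fun p _ => ?_
          rw [Finset.mul_sum]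
      _ = -(S A d j * ∑ q, D j e q * R q b) := by
          rw [collapse1 (S A) R h1 (D j) e b]
      _ = -∑ q, S A d j * (D j e q * R q b) := by rw [Finset.mul_sum]
  have T2 : ∑ j, ∑ m, S A d j * pd m (fun B => ρ B j b) A * S A e m
      = -∑ m, ∑ q, S A e m * (D m d q * R q b) := by
    rw [Finset.sum_comm, ← Finset.sum_neg_distrib]
    refine Finset.sum_congr rfl fun m _ => ?_
    calc ∑ j, S A d j * pd m (fun B => ρ B j b) A * S A e m
        = ∑ j, -(S A e m * (S A d j * (∑ p, ∑ q, R j p * D m p q * R q b))) := by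
          refine Finset.sum_congr rfl fun j _ => ?_
          rw [pdρ m j]; ring
      _ = -(S A e m * ∑ j, (S A d j * (∑ p, ∑ q, R j p * D m p q * R q b))) := by
          rw [Finset.sum_neg_distrib, Finset.mul_sum]
      _ = -(S A e m * (∑ j, ∑ p, ∑ q, S A d j * (R j p * D m p q * R q b))) := by
          congr 1; congr 1
          refine Finset.sum_congr rfl fun j _ => ?_
          rw [Finset.mul_sum]
          refine Finset.sum_congr rfl fun p _ => ?_
          rw [Finset.mul_sum]
      _ = -(S A e m * ∑ q, D m d q * R q b) := by
          rw [collapse1 (S A) R h1 (D m) d b]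
      _ = -∑ q, S A e m * (D m d q * R q b) := by rw [Finset.mul_sum]
  rw [split, T1, T2]
  have step : (-∑ j, ∑ q, S A d j * (D j e q * R q b))
      - (-∑ j, ∑ q, S A e j * (D j d q * R q b))
      = ∑ q, (∑ j, (S A e j * D j d q - S A d j * D j e q)) * R q b := by
    calc (-∑ j, ∑ q, S A d j * (D j e q * R q b))
        - (-∑ j, ∑ q, S A e j * (D j d q * R q b))
        = (∑ j, ∑ q, S A e j * (D j d q * R q b))
          - (∑ j, ∑ q, S A d j * (D j e q * R q b)) := by ring
      _ = ∑ j, ∑ q, (S A e j * (D j d q * R q b) - S A d j * (D j e q * R q b)) := by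
          rw [← Finset.sum_sub_distrib]
          exact Finset.sum_congr rfl fun j _ => (Finset.sum_sub_distrib _ _).symm
      _ = ∑ q, ∑ j, (S A e j * (D j d q * R q b) - S A d j * (D j e q * R q b)) :=
          Finset.sum_comm
      _ = ∑ q, (∑ j, (S A e j * D j d q - S A d j * D j e q)) * R q b := by
          refine Finset.sum_congr rfl fun q _ => ?_
          rw [Finset.sum_mul]
          exact Finset.sum_congr rfl fun j _ => by ring
  rw [step]
  have inner : ∀ q : Fin n, ∑ j, (S A e j * D j d q - S A d j * D j e q)
      = ∑ i, f d e i * S A i q := by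
    intro q
    have h5 : ∑ j, (S A e j * D j d q - S A d j * D j e q)
        = -∑ j, (S A d j * D j e q - S A e j * D j d q) := by
      rw [← Finset.sum_neg_distrib]
      exact Finset.sum_congr rfl fun j _ => by ring
    rw [h5, hkey q, neg_neg]
  rw [Finset.sum_congr rfl fun q _ => by rw [inner q]]
  calc ∑ q, (∑ i, f d e i * S A i q) * R q b
      = ∑ q, ∑ i, f d e i * (S A i q * R q b) := by
        refine Finset.sum_congr rfl fun q _ => ?_
        rw [Finset.sum_mul]
        exact Finset.sum_congr rfl fun i _ => by ring
    _ = ∑ i, ∑ q, f d e i * (S A i q * R q b) := Finset.sum_comm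
    _ = ∑ i, f d e i * ∑ q, S A i q * R q b := by
        exact Finset.sum_congr rfl fun i _ => (Finset.mul_sum _ _ _).symm
    _ = ∑ i, f d e i * (if i = b then (1:ℝ) else 0) := by
        simp_rw [h1]
    _ = f d e b := by simp
end

section
/- Let n ≥ 1, let ρ : ℝ^n → Mat_n(ℝ) be continuously differentiable with ρ(A) invertible for every A, and let T : ℝ^n → ℝ^n be a bijection such that T and its inverse S are twice continuously differentiable. Define ρ̃ : ℝ^n → Mat_n(ℝ) by ρ̃^i_a(Ã) := Σ_s (∂S_s/∂Ã_i)(Ã) · ρ^s_a(S(Ã)). Then ρ̃(Ã) is invertible for every Ã, and the quantity B̃ built from ρ̃ satisfies B̃_b^{de}(Ã) = B_b^{de}(S(Ã)) for every Ã ∈ ℝ^n and all indices b,d,e, where B is built from ρ. -/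
set_option autoImplicit false

open scoped BigOperators

set_option maxHeartbeats 1000000

lemma clm_sum {n : ℕ} (φ : (Fin n → ℝ) →L[ℝ] ℝ) (w : Fin n → ℝ) :
    φ w = ∑ i, w i * φ (Pi.single i 1) := by
  have h : w = ∑ i, w i • (Pi.single i 1 : Fin n → ℝ) := by
    funext j
    rw [Finset.sum_apply]
    simp [Pi.single_apply]
  conv_lhs => rw [h]
  rw [map_sum]
  refine Finset.sum_congr rfl fun i _ => ?_
  rw [map_smul, smul_eq_mul]

lemma fderiv_eval {n : ℕ} {S : (Fin n → ℝ) → (Fin n → ℝ)} {B : Fin n → ℝ}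
    (hS : DifferentiableAt ℝ S B) (t : Fin n) (v : Fin n → ℝ) :
    fderiv ℝ (fun C => S C t) B v = fderiv ℝ S B v t := by
  have h : (fun C => S C t)
      = (ContinuousLinearMap.proj (R := ℝ) (φ := fun _ : Fin n => ℝ) t) ∘ S := rfl
  rw [h, fderiv_comp B (ContinuousLinearMap.proj t).differentiableAt hS,
    ContinuousLinearMap.fderiv]
  rfl

lemma pd_comp {n : ℕ} (f : (Fin n → ℝ) → ℝ) (S : (Fin n → ℝ) → (Fin n → ℝ))
    (B : Fin n → ℝ) (hf : DifferentiableAt ℝ f (S B)) (hS : DifferentiableAt ℝ S B) (j : Fin n) :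
    pd j (fun C => f (S C)) B = ∑ t, pd t f (S B) * pd j (fun C => S C t) B := by
  have h1 : pd j (fun C => f (S C)) B = fderiv ℝ f (S B) (fderiv ℝ S B (Pi.single j 1)) := by
    show fderiv ℝ (f ∘ S) B (Pi.single j 1) = _
    rw [fderiv_comp B hf hS]; rfl
  rw [h1, clm_sum]
  refine Finset.sum_congr rfl fun t _ => ?_
  unfold pd
  rw [fderiv_eval hS]
  ring

lemma pd_coord {n : ℕ} (s t : Fin n) (A : Fin n → ℝ) :
    pd t (fun C : Fin n → ℝ => C s) A = if s = t then 1 else 0 := by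
  unfold pd
  have h : (fun C : Fin n → ℝ => C s)
      = (ContinuousLinearMap.proj (R := ℝ) (φ := fun _ : Fin n => ℝ) s : (Fin n → ℝ) →L[ℝ] ℝ) := rfl
  rw [h, ContinuousLinearMap.fderiv]
  simp [Pi.single_apply, eq_comm]

lemma contDiff_pd {n : ℕ} (u : (Fin n → ℝ) → ℝ) (hu : ContDiff ℝ 2 u) (m : Fin n) :
    ContDiff ℝ 1 (fun C => pd m u C) := by
  have h1 : ContDiff ℝ 1 (fun C => fderiv ℝ u C) := hu.fderiv_right (by norm_num)
  exact (ContinuousLinearMap.apply ℝ ℝ (Pi.single m (1:ℝ))).contDiff.comp h1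

lemma pd_pd_symm {n : ℕ} (u : (Fin n → ℝ) → ℝ) (hu : ContDiff ℝ 2 u) (B : Fin n → ℝ)
    (j m : Fin n) :
    pd j (fun C => pd m u C) B = pd m (fun C => pd j u C) B := by
  have hfd : ContDiff ℝ 1 (fun C => fderiv ℝ u C) := hu.fderiv_right (by norm_num)
  have hd : DifferentiableAt ℝ (fun C => fderiv ℝ u C) B := (hfd.differentiable one_ne_zero) B
  have key : ∀ w : Fin n → ℝ,
      fderiv ℝ (fun C => fderiv ℝ u C w) B = (fderiv ℝ (fderiv ℝ u) B).flip w := by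
    intro w
    have h : (fun C => fderiv ℝ u C w)
        = (⇑(ContinuousLinearMap.apply ℝ ℝ w)) ∘ (fun C => fderiv ℝ u C) := rfl
    rw [h, fderiv_comp B (ContinuousLinearMap.apply ℝ ℝ w).differentiableAt hd,
      ContinuousLinearMap.fderiv]
    rfl
  have hsym := (hu.contDiffAt (x := B)).isSymmSndFDerivAt (by simp [minSmoothness_of_isRCLikeNormedField])
  show fderiv ℝ (fun C => fderiv ℝ u C (Pi.single m 1)) B (Pi.single j 1)
      = fderiv ℝ (fun C => fderiv ℝ u C (Pi.single j 1)) B (Pi.single m 1)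
  rw [key, key]
  exact hsym _ _

open Matrix in
lemma entry_form {n : ℕ} (P M Q : Matrix (Fin n) (Fin n) ℝ) (d e : Fin n) :
    ∑ j, ∑ m, P d j * M m j * Q e m = (P * Mᵀ * Qᵀ) d e := by
  have h : (P * Mᵀ * Qᵀ) d e = ∑ m, ∑ j, P d j * M m j * Q e m := by
    rw [Matrix.mul_apply]
    refine Finset.sum_congr rfl fun m _ => ?_
    rw [Matrix.mul_apply, Finset.sum_mul]
    refine Finset.sum_congr rfl fun j _ => ?_
    rw [Matrix.transpose_apply, Matrix.transpose_apply]
  rw [h, Finset.sum_comm]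

open Matrix

theorem stmt1 {n : ℕ} (hn : 1 ≤ n)
    (ρ : (Fin n → ℝ) → Matrix (Fin n) (Fin n) ℝ)
    (hρ : ∀ m b, ContDiff ℝ 1 (fun A => ρ A m b))
    (hinv : ∀ A, IsUnit (ρ A))
    (T S : (Fin n → ℝ) → (Fin n → ℝ))
    (hT : ContDiff ℝ 2 T) (hS : ContDiff ℝ 2 S)
    (hTS : ∀ A, S (T A) = A) (hST : ∀ B, T (S B) = B)
    (ρt : (Fin n → ℝ) → Matrix (Fin n) (Fin n) ℝ)
    (hρt : ∀ (B : Fin n → ℝ) (i a : Fin n),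
      ρt B i a = ∑ s, pd i (fun C => S C s) B * ρ (S B) s a) :
    (∀ B : Fin n → ℝ, IsUnit (ρt B)) ∧
      (∀ (B : Fin n → ℝ) (b d e : Fin n), Bq ρt b d e B = Bq ρ b d e (S B)) := by
  classical
  have hS1 : Differentiable ℝ S := hS.differentiable two_ne_zero
  have hT1 : Differentiable ℝ T := hT.differentiable two_ne_zero
  have hSs : ∀ s, ContDiff ℝ 2 fun C => S C s := fun s =>
    (ContinuousLinearMap.proj (R := ℝ) (φ := fun _ : Fin n => ℝ) s).contDiff.comp hS
  have hTs : ∀ s, ContDiff ℝ 2 fun C => T C s := fun s =>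
    (ContinuousLinearMap.proj (R := ℝ) (φ := fun _ : Fin n => ℝ) s).contDiff.comp hT
  -- the Jacobian matrix of S
  set Jm : (Fin n → ℝ) → Matrix (Fin n) (Fin n) ℝ :=
    fun B => fun s i => pd i (fun C => S C s) B with hJmdef
  have hJK : ∀ B : Fin n → ℝ,
      Jm B * (Matrix.of fun s i => pd i (fun C => T C s) (S B)) = 1 := by
    intro B
    ext s t
    rw [Matrix.mul_apply]
    simp only [hJmdef, Matrix.of_apply]
    have h1 : pd t (fun C => S (T C) s) (S B)
        = ∑ i, pd i (fun y => S y s) (T (S B)) * pd t (fun C => T C i) (S B) :=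
      pd_comp _ _ _ (((hSs s).differentiable two_ne_zero) _) (hT1 _) t
    rw [hST B] at h1
    have h2 : (fun C => S (T C) s) = fun C : Fin n → ℝ => C s := by
      funext C; rw [hTS]
    rw [h2, pd_coord] at h1
    rw [← h1]
    simp [Matrix.one_apply]
  have hdetJ : ∀ B, IsUnit (Jm B).det := fun B =>
    Matrix.isUnit_det_of_right_inverse (hJK B)
  have hdetJt : ∀ B, IsUnit ((Jm B)ᵀ).det := by
    intro B; rw [Matrix.det_transpose]; exact hdetJ B
  have hfact : ∀ B, ρt B = (Jm B)ᵀ * ρ (S B) := by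
    intro B
    ext i a
    rw [Matrix.mul_apply, hρt]
    simp [hJmdef, Matrix.transpose_apply]
    rfl
  have part1 : ∀ B : Fin n → ℝ, IsUnit (ρt B) := by
    intro B
    rw [hfact B]
    exact (((Matrix.isUnit_iff_isUnit_det _).2 (hdetJt B))).mul (hinv (S B))
  refine ⟨part1, ?_⟩
  intro B b d e
  set A := S B with hA
  set G : Matrix (Fin n) (Fin n) ℝ := fun t s => pd t (fun C => ρ C s b) A with hGdef
  set P := (ρt B)⁻¹ with hPdef
  set R := (ρ A)⁻¹ with hRdef
  -- contraction identities
  have hPJ : P * (Jm B)ᵀ = R := by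
    rw [hPdef, hfact B, ← hA, Matrix.mul_inv_rev, Matrix.mul_assoc,
      Matrix.nonsing_inv_mul _ (hdetJt B), Matrix.mul_one, hRdef]
  have hJPt : Jm B * Pᵀ = Rᵀ := by
    have h := congrArg Matrix.transpose hPJ
    rw [Matrix.transpose_mul, Matrix.transpose_transpose] at h
    exact h
  -- derivative of the entries of ρt
  have step1 : ∀ m j, pd j (fun C => ρt C m b) B
      = (∑ s, ρ A s b * pd j (fun C => pd m (fun C' => S C' s) C) B)
        + ∑ s, Jm B s m * ∑ t, G t s * Jm B t j := by
    intro m j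
    have hgd : ∀ s, DifferentiableAt ℝ (fun C => pd m (fun C' => S C' s) C) B :=
      fun s => ((contDiff_pd _ (hSs s) m).differentiable one_ne_zero) B
    have hhd : ∀ s, DifferentiableAt ℝ (fun C => ρ (S C) s b) B :=
      fun s => (((hρ s b).differentiable one_ne_zero).comp hS1) B
    have e1 : pd j (fun C => ρt C m b) B
        = ∑ s, (pd m (fun C' => S C' s) B * pd j (fun C => ρ (S C) s b) B
            + ρ (S B) s b * pd j (fun C => pd m (fun C' => S C' s) C) B) := by
      unfold pd
      have hfun : (fun C => ρt C m b)
          = fun C => (∑ s, (fun C' => pd m (fun C'' => S C'' s) C') C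
              * (fun C' => ρ (S C') s b) C) := by
        funext C; exact hρt C m b
      rw [hfun, fderiv_fun_sum (fun s _ => ((hgd s).fun_mul (hhd s))),
        ContinuousLinearMap.sum_apply]
      refine Finset.sum_congr rfl fun s _ => ?_
      rw [fderiv_fun_mul (hgd s) (hhd s)]
      simp only [ContinuousLinearMap.add_apply, ContinuousLinearMap.smul_apply,
        smul_eq_mul, pd]
      try ring
    have e2 : ∀ s, pd j (fun C => ρ (S C) s b) B = ∑ t, G t s * Jm B t j := by
      intro s
      exact pd_comp (fun y => ρ y s b) S B (((hρ s b).differentiable one_ne_zero) (S B)) (hS1 B) j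
    rw [e1, Finset.sum_add_distrib, add_comm]
    congr 1
    refine Finset.sum_congr rfl fun s _ => ?_
    rw [e2 s]
  -- antisymmetrized derivative in matrix form
  have step2 : ∀ m j, pd j (fun C => ρt C m b) B - pd m (fun C => ρt C j b) B
      = ((Jm B)ᵀ * (Gᵀ - G) * Jm B) m j := by
    intro m j
    have hsym : ∀ s, pd j (fun C => pd m (fun C' => S C' s) C) B
        = pd m (fun C => pd j (fun C' => S C' s) C) B :=
      fun s => pd_pd_symm _ (hSs s) B j m
    rw [step1 m j, step1 j m]
    simp only [hsym]
    have hcancel : ∀ x y z : ℝ, (z + x) - (z + y) = x - y := by intros; ring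
    rw [hcancel]
    have hX : (∑ s, Jm B s m * ∑ t, G t s * Jm B t j)
        = ∑ s, ∑ t, Jm B s m * (G t s * Jm B t j) := by
      simp [Finset.mul_sum]
    have hY : (∑ s, Jm B s j * ∑ t, G t s * Jm B t m)
        = ∑ s, ∑ t, Jm B t j * (G s t * Jm B s m) := by
      simp only [Finset.mul_sum]
      rw [Finset.sum_comm]
    have hR : ((Jm B)ᵀ * (Gᵀ - G) * Jm B) m j
        = ∑ s, ∑ t, Jm B s m * ((G t s - G s t) * Jm B t j) := by
      rw [Matrix.mul_apply, Finset.sum_comm]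
      refine Finset.sum_congr rfl fun s _ => ?_
      rw [Matrix.mul_apply, Finset.sum_mul]
      refine Finset.sum_congr rfl fun t _ => ?_
      simp only [Matrix.transpose_apply, Matrix.sub_apply]
      ring
    rw [hX, hY, hR, ← Finset.sum_sub_distrib]
    refine Finset.sum_congr rfl fun s _ => ?_
    rw [← Finset.sum_sub_distrib]
    refine Finset.sum_congr rfl fun t _ => ?_
    ring
  -- both sides as matrix entries
  have hBqt : Bq ρt b d e B
      = (P * ((Jm B)ᵀ * (Gᵀ - G) * Jm B)ᵀ * Pᵀ) d e := by
    unfold Bq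
    rw [← entry_form]
    exact Finset.sum_congr rfl fun j _ => Finset.sum_congr rfl fun m _ => by
      rw [step2 m j]
  have hBq : Bq ρ b d e A = (R * (Gᵀ - G)ᵀ * Rᵀ) d e := by
    unfold Bq
    rw [← entry_form]
    refine Finset.sum_congr rfl fun j _ => Finset.sum_congr rfl fun m _ => ?_
    simp only [Matrix.transpose_apply, Matrix.sub_apply, hGdef]
    rfl
  have hMat : P * ((Jm B)ᵀ * (Gᵀ - G) * Jm B)ᵀ * Pᵀ = R * (Gᵀ - G)ᵀ * Rᵀ := by
    rw [Matrix.transpose_mul, Matrix.transpose_mul, Matrix.transpose_transpose]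
    calc P * ((Jm B)ᵀ * ((Gᵀ - G)ᵀ * (Jm B)ᵀᵀ)) * Pᵀ
        = (P * (Jm B)ᵀ) * ((Gᵀ - G)ᵀ * (Jm B * Pᵀ)) := by
          rw [Matrix.transpose_transpose]
          rw [Matrix.mul_assoc, Matrix.mul_assoc, Matrix.mul_assoc, Matrix.mul_assoc]
      _ = R * ((Gᵀ - G)ᵀ * Rᵀ) := by rw [hPJ, hJPt]
      _ = R * (Gᵀ - G)ᵀ * Rᵀ := by rw [Matrix.mul_assoc]
  rw [hBqt, hMat, hBq]
end

section
/- Let n ≥ 1, let f be structure constants, let ρ : ℝ^n → Mat_n(ℝ) be continuously differentiable with ρ(A) invertible for every A, and assume that for all A and all indices b,r,s: ∂ρ^r_b/∂A_s(A) − ∂ρ^s_b/∂A_r(A) = Σ_{l,q} f^{lq}_b ρ^s_l(A) ρ^r_q(A). Let A : ℝ^n → ℝ^n be smooth. Then for every x ∈ ℝ^n and every index b: Σ_a {A_a, ρ^a_b ∘ A}(x) = −(1/2) Σ_{r,t,q,l} f^{rt}_b ρ^q_r(A(x)) ρ^l_t(A(x)) {A_q, A_l}(x), where ρ^a_b ∘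 A denotes the function x ↦ ρ^a_b(A(x)). -/
set_option autoImplicit false

open scoped BigOperators

/-- Lie-Poisson bracket `{u,v}(x) = Σ_{a,b,c} f^{ab}_c x^c ∂_a u ∂_b v`. -/
noncomputable def pb {n : ℕ} (f : Fin n → Fin n → Fin n → ℝ)
    (u v : (Fin n → ℝ) → ℝ) (x : Fin n → ℝ) : ℝ :=
  ∑ a, ∑ b, ∑ c, f a b c * x c * pd a u x * pd b v x

lemma pd_comp_s13 {n : ℕ} (g : (Fin n → ℝ) → ℝ) (hg : ContDiff ℝ 1 g)
    (A : (Fin n → ℝ) → Fin n → ℝ) (hA : ContDiff ℝ (⊤ : ℕ∞) A) (x : Fin n → ℝ) (j : Fin n) :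
    pd j (fun y => g (A y)) x = ∑ s, pd s g (A x) * pd j (fun y => A y s) x := by
  have hgd : DifferentiableAt ℝ g (A x) := (hg.differentiable one_ne_zero).differentiableAt
  have hAd : DifferentiableAt ℝ A x := (hA.differentiable (by simp)).differentiableAt
  have hcomp : fderiv ℝ (fun y => g (A y)) x = (fderiv ℝ g (A x)).comp (fderiv ℝ A x) :=
    fderiv_comp x hgd hAd
  have hproj : ∀ s : Fin n, fderiv ℝ (fun y => A y s) x (Pi.single j 1)
      = fderiv ℝ A x (Pi.single j 1) s := by
    intro s
    have h := (((ContinuousLinearMap.proj s : ((Fin n) → ℝ) →L[ℝ] ℝ)).hasFDerivAt.comp x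
      hAd.hasFDerivAt).fderiv
    simp only [Function.comp_def, ContinuousLinearMap.proj_apply] at h
    rw [h]; rfl
  unfold pd
  rw [hcomp]
  simp only [ContinuousLinearMap.comp_apply]
  set v := fderiv ℝ A x (Pi.single j 1) with hv
  have hvsum : v = ∑ s, v s • (Pi.single s (1:ℝ) : Fin n → ℝ) := by
    funext t; simp [Finset.sum_apply, Pi.single_apply]
  rw [hvsum, map_sum]
  refine Finset.sum_congr rfl fun s _ => ?_
  rw [map_smul, smul_eq_mul, mul_comm, hproj s]

lemma sum4_rot {n : ℕ} (F : Fin n → Fin n → Fin n → Fin n → ℝ) :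
    ∑ i, ∑ j, ∑ c, ∑ s, F i j c s = ∑ s, ∑ i, ∑ j, ∑ c, F i j c s := by
  calc ∑ i, ∑ j, ∑ c, ∑ s, F i j c s
      = ∑ i, ∑ j, ∑ s, ∑ c, F i j c s := by
        exact Finset.sum_congr rfl fun i _ => Finset.sum_congr rfl fun j _ => Finset.sum_comm
    _ = ∑ i, ∑ s, ∑ j, ∑ c, F i j c s := Finset.sum_congr rfl fun i _ => Finset.sum_comm
    _ = ∑ s, ∑ i, ∑ j, ∑ c, F i j c s := Finset.sum_comm

lemma pb_antisymm {n : ℕ} {f : Fin n → Fin n → Fin n → ℝ}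
    (hf : ∀ a b c, f a b c = - f b a c) (u v : (Fin n → ℝ) → ℝ) (x : Fin n → ℝ) :
    pb f u v x = - pb f v u x := by
  unfold pb
  rw [Finset.sum_comm, ← Finset.sum_neg_distrib]
  refine Finset.sum_congr rfl fun i _ => ?_
  rw [← Finset.sum_neg_distrib]
  refine Finset.sum_congr rfl fun j _ => ?_
  rw [← Finset.sum_neg_distrib]
  refine Finset.sum_congr rfl fun c _ => ?_
  rw [hf j i c]; ring

theorem stmt13 {n : ℕ} (hn : 1 ≤ n) (f : Fin n → Fin n → Fin n → ℝ)
    (hf : IsStructureConstants f)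
    (ρ : (Fin n → ℝ) → Matrix (Fin n) (Fin n) ℝ)
    (hρ : ∀ i j, ContDiff ℝ 1 (fun A => ρ A i j))
    (hinv : ∀ A : Fin n → ℝ, IsUnit (ρ A))
    (hi : ∀ (B : Fin n → ℝ) (b r s : Fin n),
      pd s (fun C => ρ C r b) B - pd r (fun C => ρ C s b) B
        = ∑ l, ∑ q, f l q b * ρ B s l * ρ B r q)
    (A : (Fin n → ℝ) → Fin n → ℝ) (hA : ContDiff ℝ (⊤ : ℕ∞) A) :
    ∀ (x : Fin n → ℝ) (b : Fin n),
      ∑ a, pb f (fun y => A y a) (fun y => ρ (A y) a b) x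
        = -(1/2) * ∑ r, ∑ t, ∑ q, ∑ l, f r t b * ρ (A x) q r * ρ (A x) l t *
            pb f (fun y => A y q) (fun y => A y l) x := by
  intro x b
  set M : Fin n → Fin n → ℝ := fun a s => pb f (fun y => A y a) (fun y => A y s) x with hMdef
  set D : Fin n → Fin n → ℝ := fun s a => pd s (fun C => ρ C a b) (A x) with hDdef
  set R : Fin n → Fin n → ℝ := fun i j => ρ (A x) i j with hRdef
  -- Step 1 : chain rule inside the bracket
  have h1 : ∀ a : Fin n, pb f (fun y => A y a) (fun y => ρ (A y) a b) x
      = ∑ s, D s a * M a s := by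
    intro a
    have hcd : ContDiff ℝ 1 (fun C => ρ C a b) := hρ a b
    unfold pb
    simp only [pd_comp_s13 (fun C => ρ C a b) hcd A hA x]
    simp only [Finset.mul_sum]
    rw [sum4_rot]
    refine Finset.sum_congr rfl fun s _ => ?_
    simp only [hMdef, hDdef, pb, Finset.mul_sum]
    refine Finset.sum_congr rfl fun i _ => Finset.sum_congr rfl fun j _ =>
      Finset.sum_congr rfl fun c _ => ?_
    ring
  have hM : ∀ a s, M s a = - M a s := fun a s => pb_antisymm hf.1 _ _ x
  -- Step 2 : antisymmetrization
  have hswap : ∑ a, ∑ s, D a s * M a s = - ∑ a, ∑ s, D s a * M a s := by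
    rw [Finset.sum_comm, ← Finset.sum_neg_distrib]
    refine Finset.sum_congr rfl fun a _ => ?_
    rw [← Finset.sum_neg_distrib]
    refine Finset.sum_congr rfl fun s _ => ?_
    rw [hM s a]; ring
  have h2 : ∑ a, ∑ s, D s a * M a s
      = (1/2) * ∑ a, ∑ s, (D s a - D a s) * M a s := by
    have : ∑ a, ∑ s, (D s a - D a s) * M a s
        = ∑ a, ∑ s, D s a * M a s - ∑ a, ∑ s, D a s * M a s := by
      simp only [sub_mul, Finset.sum_sub_distrib]
    rw [this, hswap]; ring
  -- Step 3 : use the hypothesis hi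
  have h3 : ∀ a s : Fin n, D s a - D a s = ∑ l, ∑ q, f l q b * R s l * R a q :=
    fun a s => hi (A x) b a s
  -- Step 4 : index gymnastics
  have key : ∑ a, ∑ s, ∑ l, ∑ q, f l q b * R s l * R a q * M a s
      = - ∑ r, ∑ t, ∑ q, ∑ l, f r t b * R q r * R l t * M q l := by
    rw [sum4_rot, sum4_rot, Finset.sum_comm, ← Finset.sum_neg_distrib]
    refine Finset.sum_congr rfl fun l _ => ?_
    rw [← Finset.sum_neg_distrib]
    refine Finset.sum_congr rfl fun q _ => ?_
    rw [← Finset.sum_neg_distrib]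
    refine Finset.sum_congr rfl fun a' _ => ?_
    rw [← Finset.sum_neg_distrib]
    refine Finset.sum_congr rfl fun s' _ => ?_
    rw [hf.1 q l b]; ring
  calc ∑ a, pb f (fun y => A y a) (fun y => ρ (A y) a b) x
      = ∑ a, ∑ s, D s a * M a s := Finset.sum_congr rfl fun a _ => h1 a
    _ = (1/2) * ∑ a, ∑ s, (D s a - D a s) * M a s := h2
    _ = (1/2) * ∑ a, ∑ s, ∑ l, ∑ q, f l q b * R s l * R a q * M a s := by
        congr 1
        refine Finset.sum_congr rfl fun a _ => Finset.sum_congr rfl fun s _ => ?_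
        rw [h3 a s]
        simp only [Finset.sum_mul]
    _ = -(1/2) * ∑ r, ∑ t, ∑ q, ∑ l, f r t b * R q r * R l t * M q l := by
        rw [key]; ring
end

section
/- Let d ≥ 2 and U = {x ∈ ℝ^d : x^1 > 0}. There is no family of functions μ_λ : U → ℝ, indexed by λ ∈ ℝ, such that (i) for every λ ≠ 0, every Ω > 0 and every x ∈ U: μ_λ(Ω x) = Ω^{1−d} μ_λ(x), and (ii) for every x ∈ U the function λ ↦ μ_λ(x) tends to 1 as λ → 0 through nonzero values. (Hence no gauge-invariant measure for κ-Minkowski electrodynamics is compatible with the commutative limit μ → 1.) -/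
open Filter Topology

theorem eq_one_of_tendsto_of_eventuallyEq_const_mul {α : Type*} {l : Filter α} [l.NeBot]
    {f g : α → ℝ} {c : ℝ} (hf : Tendsto f l (𝓝 1)) (hg : Tendsto g l (𝓝 1))
    (hgf : g =ᶠ[l] fun a => c * f a) : c = 1 := by
  have hcg : Tendsto g l (𝓝 (c * 1)) := (hf.const_mul c).congr' hgf.symm
  simpa using tendsto_nhds_unique hcg hg

theorem zpow_one_sub_lt_one {d : ℕ} (hd : 2 ≤ d) {Ω : ℝ} (hΩ : 1 < Ω) :
    Ω ^ ((1 : ℤ) - d) < 1 :=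
  zpow_lt_one_of_neg₀ hΩ (by omega)

theorem stmt17 {d : ℕ} (hd : 2 ≤ d) :
    ¬ ∃ μ : ℝ → (Fin d → ℝ) → ℝ,
      (∀ lam : ℝ, lam ≠ 0 → ∀ Ω : ℝ, 0 < Ω → ∀ x : Fin d → ℝ,
        0 < x ⟨1, by omega⟩ →
          μ lam (fun i => Ω * x i) = Ω ^ ((1 : ℤ) - d) * μ lam x) ∧
      (∀ x : Fin d → ℝ, 0 < x ⟨1, by omega⟩ →
        Filter.Tendsto (fun lam => μ lam x) (nhdsWithin 0 {(0 : ℝ)}ᶜ) (nhds 1)) := by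
  rintro ⟨μ, hscale, hlim⟩
  -- Compare the limits at x = (1, …, 1) and at 2x: homogeneity forces 2 ^ (1 - d) = 1.
  have hx : (0 : ℝ) < (fun _ : Fin d => (1 : ℝ)) ⟨1, by omega⟩ := one_pos
  have h2x : (0 : ℝ) < (fun _ : Fin d => (2 : ℝ) * 1) ⟨1, by omega⟩ := by norm_num
  have hscale_near_zero : (fun lam => μ lam fun _ => 2 * 1) =ᶠ[𝓝[≠] 0]
      fun lam => (2 : ℝ) ^ ((1 : ℤ) - d) * μ lam fun _ => 1 := by
    filter_upwards [self_mem_nhdsWithin] with lam hlam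
    exact hscale lam hlam 2 two_pos _ hx
  have hpow : (2 : ℝ) ^ ((1 : ℤ) - d) = 1 :=
    eq_one_of_tendsto_of_eventuallyEq_const_mul (hlim _ hx) (hlim _ h2x) hscale_near_zero
  exact (zpow_one_sub_lt_one hd one_lt_two).ne hpow
end

section
/- Let n ≥ 1 and let f be structure constants. Suppose γ, ρ : ℝ^n → Mat_n(ℝ) are continuously differentiable and solve the master equations. Let T : ℝ^n → ℝ^n be a bijection such that T and its inverse S are twice continuously differentiable. Define γ̃, ρ̃ : ℝ^n → Mat_n(ℝ) by γ̃^i_j(Ã) := Σ_k γ^i_k(S(Ã)) (∂T_j/∂A_k)(S(Ã)) and ρ̃^i_a(Ã) := Σ_s (∂S_s/∂Ã_i)(Ã) ρ^s_a(S(Ã)). Then γ̃ and ρ̃ solve the master equations (with derivatives taken with respect to Ã). -/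
set_option autoImplicit false

open scoped BigOperators

namespace Stmt18Aux

variable {n : ℕ}

lemma pd_sum {ι : Type*} (s : Finset ι) (u : ι → (Fin n → ℝ) → ℝ) (x : Fin n → ℝ) (a : Fin n)
    (h : ∀ k ∈ s, DifferentiableAt ℝ (u k) x) :
    pd a (fun y => ∑ k ∈ s, u k y) x = ∑ k ∈ s, pd a (u k) x := by
  unfold pd
  rw [fderiv_fun_sum h]
  simp

lemma pd_mul (u v : (Fin n → ℝ) → ℝ) (x : Fin n → ℝ) (a : Fin n)
    (hu : DifferentiableAt ℝ u x) (hv : DifferentiableAt ℝ v x) :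
    pd a (fun y => u y * v y) x = u x * pd a v x + v x * pd a u x := by
  unfold pd
  rw [fderiv_fun_mul hu hv]
  simp [mul_comm]

lemma fderiv_eval (u : (Fin n → ℝ) → ℝ) (x v : Fin n → ℝ) :
    fderiv ℝ u x v = ∑ i, v i * pd i u x := by
  have hv : v = ∑ i, (v i) • (Pi.single i 1 : Fin n → ℝ) := by
    funext j; simp [Finset.sum_apply, Pi.single_apply]
  conv_lhs => rw [hv]
  rw [map_sum]
  simp [pd]

lemma pd_proj (s p : Fin n) (x : Fin n → ℝ) :
    pd p (fun y => y s) x = if s = p then 1 else 0 := by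
  have : (fun y : Fin n → ℝ => y s) = (ContinuousLinearMap.proj (R := ℝ) (φ := fun _ : Fin n => ℝ) s) := rfl
  rw [pd, this, ContinuousLinearMap.fderiv]
  simp [Pi.single_apply]

lemma pd_comp_apply (Φ : (Fin n → ℝ) → (Fin n → ℝ)) (x : Fin n → ℝ) (p i : Fin n)
    (hΦ : DifferentiableAt ℝ Φ x) :
    fderiv ℝ Φ x (Pi.single p 1) i = pd p (fun y => Φ y i) x := by
  have h : (fun y => Φ y i) = (ContinuousLinearMap.proj (R := ℝ) (φ := fun _ : Fin n => ℝ) i) ∘ Φ := rfl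
  rw [pd, h, fderiv_comp (x := x) (ContinuousLinearMap.proj i).differentiableAt hΦ,
    ContinuousLinearMap.fderiv]
  rfl

lemma pd_comp (u : (Fin n → ℝ) → ℝ) (Φ : (Fin n → ℝ) → (Fin n → ℝ)) (x : Fin n → ℝ) (p : Fin n)
    (hu : DifferentiableAt ℝ u (Φ x)) (hΦ : DifferentiableAt ℝ Φ x) :
    pd p (fun y => u (Φ y)) x = ∑ i, pd i u (Φ x) * pd p (fun y => Φ y i) x := by
  have h : (fun y => u (Φ y)) = u ∘ Φ := rfl
  rw [pd, h, fderiv_comp (x := x) hu hΦ, ContinuousLinearMap.comp_apply,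
    fderiv_eval u (Φ x) (fderiv ℝ Φ x (Pi.single p 1))]
  exact Finset.sum_congr rfl fun i _ => by rw [pd_comp_apply Φ x p i hΦ, mul_comm]

lemma fderiv_differentiable {u : (Fin n → ℝ) → ℝ} (hu : ContDiff ℝ 2 u) :
    Differentiable ℝ (fderiv ℝ u) :=
  (hu.fderiv_right (m := 1) (by norm_num)).differentiable one_ne_zero

lemma pd_differentiable {u : (Fin n → ℝ) → ℝ} (hu : ContDiff ℝ 2 u) (m : Fin n) :
    Differentiable ℝ (fun x => pd m u x) :=
  (fderiv_differentiable hu).clm_apply (differentiable_const _)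

lemma pd_pd_eq {u : (Fin n → ℝ) → ℝ} (hu : ContDiff ℝ 2 u) (s m : Fin n) (x : Fin n → ℝ) :
    pd s (fun y => pd m u y) x = fderiv ℝ (fderiv ℝ u) x (Pi.single s 1) (Pi.single m 1) := by
  have h : pd s (fun y => pd m u y) x
      = fderiv ℝ (fun y => fderiv ℝ u y (Pi.single m 1)) x (Pi.single s 1) := rfl
  rw [h, fderiv_clm_apply (fderiv_differentiable hu x) (differentiableAt_const _)]
  simp

lemma pd_symm {u : (Fin n → ℝ) → ℝ} (hu : ContDiff ℝ 2 u) (s m : Fin n) (x : Fin n → ℝ) :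
    pd s (fun y => pd m u y) x = pd m (fun y => pd s u y) x := by
  rw [pd_pd_eq hu s m x, pd_pd_eq hu m s x]
  exact second_derivative_symmetric
    (f := u) (f' := fderiv ℝ u)
    (fun y => ((hu.differentiable two_ne_zero) y).hasFDerivAt)
    ((fderiv_differentiable hu x).hasFDerivAt) _ _

lemma contract (J K : Fin n → Fin n → ℝ)
    (hJK : ∀ p s, ∑ i, J p i * K i s = if p = s then 1 else 0) (u v : Fin n → ℝ) :
    ∑ i, (∑ p, u p * J p i) * (∑ s, v s * K i s) = ∑ p, u p * v p := by
  have h1 : ∀ i : Fin n, (∑ p, u p * J p i) * (∑ s, v s * K i s)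
      = ∑ p, ∑ s, (u p * v s) * (J p i * K i s) := fun i => by
    rw [Finset.sum_mul_sum]
    exact Finset.sum_congr rfl fun p _ => Finset.sum_congr rfl fun s _ => by ring
  calc ∑ i, (∑ p, u p * J p i) * (∑ s, v s * K i s)
      = ∑ i, ∑ p, ∑ s, (u p * v s) * (J p i * K i s) := Finset.sum_congr rfl fun i _ => h1 i
    _ = ∑ p, ∑ s, (u p * v s) * ∑ i, J p i * K i s := by
        rw [Finset.sum_comm]
        refine Finset.sum_congr rfl fun p _ => ?_
        rw [Finset.sum_comm]
        exact Finset.sum_congr rfl fun s _ => by rw [Finset.mul_sum]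
    _ = ∑ p, u p * v p := by
        simp only [hJK, mul_ite, mul_one, mul_zero]
        exact Finset.sum_congr rfl fun p _ => by simp

lemma antisym_pair (H : Fin n → Fin n → ℝ) (hH : ∀ p m, H p m = H m p) (u v : Fin n → ℝ) :
    ∑ p, ∑ m, (u p * v m - v p * u m) * H p m = 0 := by
  have h1 : ∑ p, ∑ m, v p * u m * H p m = ∑ p, ∑ m, u p * v m * H p m := by
    rw [Finset.sum_comm]
    exact Finset.sum_congr rfl fun p _ => Finset.sum_congr rfl fun m _ => by rw [hH]; ring
  simp only [sub_mul, Finset.sum_sub_distrib, h1, sub_self]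

lemma exchange (X Y : Fin n → Fin n → ℝ) (u v : Fin n → ℝ) :
    ∑ l, (∑ p, u p * X p l) * (∑ s, v s * Y l s)
      = ∑ p, ∑ s, (u p * v s) * (∑ l, X p l * Y l s) := by
  have h1 : ∀ l : Fin n, (∑ p, u p * X p l) * (∑ s, v s * Y l s)
      = ∑ p, ∑ s, (u p * v s) * (X p l * Y l s) := fun l => by
    rw [Finset.sum_mul_sum]
    exact Finset.sum_congr rfl fun p _ => Finset.sum_congr rfl fun s _ => by ring
  calc ∑ l, (∑ p, u p * X p l) * (∑ s, v s * Y l s)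
      = ∑ l, ∑ p, ∑ s, (u p * v s) * (X p l * Y l s) := Finset.sum_congr rfl fun l _ => h1 l
    _ = ∑ p, ∑ s, (u p * v s) * ∑ l, X p l * Y l s := by
        rw [Finset.sum_comm]
        refine Finset.sum_congr rfl fun p _ => ?_
        rw [Finset.sum_comm]
        exact Finset.sum_congr rfl fun s _ => by rw [Finset.mul_sum]

lemma alg1 (f : Fin n → Fin n → Fin n → ℝ) (G J K : Fin n → Fin n → ℝ)
    (D H : Fin n → Fin n → Fin n → ℝ)
    (hI : ∀ p s, ∑ i, J p i * K i s = if p = s then 1 else 0)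
    (hH : ∀ l p m, H l p m = H l m p)
    (hm : ∀ j k m, ∑ p, (G j p * D p k m - G k p * D p j m) = ∑ i, G i m * f j k i)
    (j k l : Fin n) :
    ∑ i, ((∑ p, G j p * J p i) * (∑ s, (∑ m, (D s k m * J m l + G k m * H l s m)) * K i s)
        - (∑ p, G k p * J p i) * (∑ s, (∑ m, (D s j m * J m l + G j m * H l s m)) * K i s))
      = ∑ i, (∑ p, G i p * J p l) * f j k i := by
  have hc1 := contract J K hI (G j) (fun s => ∑ m, (D s k m * J m l + G k m * H l s m))
  have hc2 := contract J K hI (G k) (fun s => ∑ m, (D s j m * J m l + G j m * H l s m))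
  rw [Finset.sum_sub_distrib, hc1, hc2, ← Finset.sum_sub_distrib]
  have step1 : ∑ p, (G j p * (∑ m, (D p k m * J m l + G k m * H l p m))
        - G k p * (∑ m, (D p j m * J m l + G j m * H l p m)))
      = (∑ p, ∑ m, (G j p * D p k m - G k p * D p j m) * J m l)
        + ∑ p, ∑ m, (G j p * G k m - G k p * G j m) * H l p m := by
    rw [← Finset.sum_add_distrib]
    refine Finset.sum_congr rfl fun p _ => ?_
    rw [Finset.mul_sum, Finset.mul_sum, ← Finset.sum_sub_distrib, ← Finset.sum_add_distrib]
    exact Finset.sum_congr rfl fun m _ => by ring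
  rw [step1, antisym_pair (fun p m => H l p m) (fun p m => hH l p m) (G j) (G k), add_zero]
  calc ∑ p, ∑ m, (G j p * D p k m - G k p * D p j m) * J m l
      = ∑ m, (∑ p, (G j p * D p k m - G k p * D p j m)) * J m l := by
        rw [Finset.sum_comm]
        exact Finset.sum_congr rfl fun m _ => (Finset.sum_mul _ _ _).symm
    _ = ∑ m, (∑ i, G i m * f j k i) * J m l :=
        Finset.sum_congr rfl fun m _ => by rw [hm j k m]
    _ = ∑ m, ∑ i, G i m * f j k i * J m l :=
        Finset.sum_congr rfl fun m _ => Finset.sum_mul _ _ _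
    _ = ∑ i, ∑ m, G i m * f j k i * J m l := Finset.sum_comm
    _ = ∑ i, (∑ p, G i p * J p l) * f j k i := by
        refine Finset.sum_congr rfl fun i _ => ?_
        rw [Finset.sum_mul]
        exact Finset.sum_congr rfl fun p _ => by ring

lemma alg2 (G R : Fin n → ℝ) (J K Dρ Dγ N : Fin n → Fin n → ℝ)
    (H : Fin n → Fin n → Fin n → ℝ) (i : Fin n)
    (hI : ∀ p s, ∑ l, J p l * K l s = if p = s then 1 else 0)
    (hm : ∀ s, ∑ l, (G l * Dρ l s + R l * Dγ s l) = 0)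
    (hI3 : ∀ m t, ∑ l, ((∑ s, H l s m * K i s) * K l t + J m l * N l t) = 0) :
    ∑ l, ((∑ p, G p * J p l) * (∑ s, (K i s * (∑ t, Dρ t s * K l t) + R s * N l s))
        + (∑ t, K l t * R t) * (∑ s, (∑ m, (Dγ s m * J m l + G m * H l s m)) * K i s)) = 0 := by
  have hb : ∀ l : Fin n, (∑ s, K i s * (∑ t, Dρ t s * K l t))
      = ∑ t, (∑ s, K i s * Dρ t s) * K l t := fun l => by
    calc ∑ s, K i s * (∑ t, Dρ t s * K l t)
        = ∑ s, ∑ t, K i s * Dρ t s * K l t := by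
          refine Finset.sum_congr rfl fun s _ => ?_
          rw [Finset.mul_sum]
          exact Finset.sum_congr rfl fun t _ => by ring
      _ = ∑ t, ∑ s, K i s * Dρ t s * K l t := Finset.sum_comm
      _ = ∑ t, (∑ s, K i s * Dρ t s) * K l t :=
          Finset.sum_congr rfl fun t _ => (Finset.sum_mul _ _ _).symm
  have he : ∀ l : Fin n, (∑ s, (∑ m, Dγ s m * J m l) * K i s)
      = ∑ m, (∑ s, Dγ s m * K i s) * J m l := fun l => by
    calc ∑ s, (∑ m, Dγ s m * J m l) * K i s
        = ∑ s, ∑ m, Dγ s m * K i s * J m l := by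
          refine Finset.sum_congr rfl fun s _ => ?_
          rw [Finset.sum_mul]
          exact Finset.sum_congr rfl fun m _ => by ring
      _ = ∑ m, ∑ s, Dγ s m * K i s * J m l := Finset.sum_comm
      _ = ∑ m, (∑ s, Dγ s m * K i s) * J m l :=
          Finset.sum_congr rfl fun m _ => (Finset.sum_mul _ _ _).symm
  have hf : ∀ l : Fin n, (∑ s, (∑ m, G m * H l s m) * K i s)
      = ∑ m, G m * (∑ s, H l s m * K i s) := fun l => by
    calc ∑ s, (∑ m, G m * H l s m) * K i s
        = ∑ s, ∑ m, G m * (H l s m * K i s) := by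
          refine Finset.sum_congr rfl fun s _ => ?_
          rw [Finset.sum_mul]
          exact Finset.sum_congr rfl fun m _ => by ring
      _ = ∑ m, ∑ s, G m * (H l s m * K i s) := Finset.sum_comm
      _ = ∑ m, G m * (∑ s, H l s m * K i s) :=
          Finset.sum_congr rfl fun m _ => (Finset.mul_sum _ _ _).symm
  have split : ∑ l, ((∑ p, G p * J p l) * (∑ s, (K i s * (∑ t, Dρ t s * K l t) + R s * N l s))
        + (∑ t, K l t * R t) * (∑ s, (∑ m, (Dγ s m * J m l + G m * H l s m)) * K i s))
      = ((∑ l, (∑ p, G p * J p l) * (∑ t, (∑ s, K i s * Dρ t s) * K l t))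
          + ∑ l, (∑ m, (∑ s, Dγ s m * K i s) * J m l) * (∑ t, R t * K l t))
        + ((∑ l, (∑ p, G p * J p l) * (∑ s, R s * N l s))
          + ∑ l, (∑ m, G m * (∑ s, H l s m * K i s)) * (∑ t, R t * K l t)) := by
    rw [← Finset.sum_add_distrib, ← Finset.sum_add_distrib, ← Finset.sum_add_distrib]
    refine Finset.sum_congr rfl fun l _ => ?_
    have h2 : (∑ s, (∑ m, (Dγ s m * J m l + G m * H l s m)) * K i s)
        = (∑ s, (∑ m, Dγ s m * J m l) * K i s) + ∑ s, (∑ m, G m * H l s m) * K i s := by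
      rw [← Finset.sum_add_distrib]
      refine Finset.sum_congr rfl fun s _ => ?_
      rw [Finset.sum_add_distrib, add_mul]
    have h1 : (∑ s, (K i s * (∑ t, Dρ t s * K l t) + R s * N l s))
        = (∑ s, K i s * (∑ t, Dρ t s * K l t)) + ∑ s, R s * N l s :=
      Finset.sum_add_distrib
    rw [h1, h2, hb l, he l, hf l]
    have h3 : (∑ t, K l t * R t) = ∑ t, R t * K l t :=
      Finset.sum_congr rfl fun t _ => mul_comm _ _
    rw [h3]
    ring
  rw [split]
  have p11 : (∑ l, (∑ p, G p * J p l) * (∑ t, (∑ s, K i s * Dρ t s) * K l t))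
      = ∑ s, K i s * ∑ p, G p * Dρ p s := by
    rw [contract J K hI G (fun t => ∑ s, K i s * Dρ t s)]
    calc ∑ p, G p * ∑ s, K i s * Dρ p s
        = ∑ p, ∑ s, K i s * (G p * Dρ p s) := by
          refine Finset.sum_congr rfl fun p _ => ?_
          rw [Finset.mul_sum]
          exact Finset.sum_congr rfl fun s _ => by ring
      _ = ∑ s, ∑ p, K i s * (G p * Dρ p s) := Finset.sum_comm
      _ = ∑ s, K i s * ∑ p, G p * Dρ p s :=
          Finset.sum_congr rfl fun s _ => (Finset.mul_sum _ _ _).symm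
  have p21 : (∑ l, (∑ m, (∑ s, Dγ s m * K i s) * J m l) * (∑ t, R t * K l t))
      = ∑ s, K i s * ∑ m, R m * Dγ s m := by
    rw [contract J K hI (fun m => ∑ s, Dγ s m * K i s) R]
    calc ∑ m, (∑ s, Dγ s m * K i s) * R m
        = ∑ m, ∑ s, K i s * (R m * Dγ s m) := by
          refine Finset.sum_congr rfl fun m _ => ?_
          rw [Finset.sum_mul]
          exact Finset.sum_congr rfl fun s _ => by ring
      _ = ∑ s, ∑ m, K i s * (R m * Dγ s m) := Finset.sum_comm
      _ = ∑ s, K i s * ∑ m, R m * Dγ s m :=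
          Finset.sum_congr rfl fun s _ => (Finset.mul_sum _ _ _).symm
  have h12 : (∑ l, (∑ p, G p * J p l) * (∑ s, R s * N l s))
      = ∑ p, ∑ s, (G p * R s) * (∑ l, J p l * N l s) := exchange J N G R
  have h22 : (∑ l, (∑ m, G m * (∑ s, H l s m * K i s)) * (∑ t, R t * K l t))
      = ∑ m, ∑ t, (G m * R t) * (∑ l, (∑ s, H l s m * K i s) * K l t) := by
    have := exchange (fun m l => ∑ s, H l s m * K i s) (fun l t => K l t) G R
    exact this
  rw [p11, p21, h12, h22]
  have part1 : (∑ s, K i s * ∑ p, G p * Dρ p s) + (∑ s, K i s * ∑ m, R m * Dγ s m) = 0 := by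
    rw [← Finset.sum_add_distrib]
    refine Finset.sum_eq_zero fun s _ => ?_
    rw [← mul_add, ← Finset.sum_add_distrib, hm s, mul_zero]
  have part2 : (∑ p, ∑ s, (G p * R s) * (∑ l, J p l * N l s))
      + (∑ m, ∑ t, (G m * R t) * (∑ l, (∑ s, H l s m * K i s) * K l t)) = 0 := by
    rw [← Finset.sum_add_distrib]
    refine Finset.sum_eq_zero fun m _ => ?_
    rw [← Finset.sum_add_distrib]
    refine Finset.sum_eq_zero fun t _ => ?_
    rw [← mul_add, ← Finset.sum_add_distrib]
    have h0 : ∑ l, (J m l * N l t + (∑ s, H l s m * K i s) * K l t) = 0 := by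
      rw [← hI3 m t]
      exact Finset.sum_congr rfl fun l _ => by ring
    rw [h0, mul_zero]
  rw [part1, part2, add_zero]

section Main
variable {n : ℕ} (T S : (Fin n → ℝ) → (Fin n → ℝ))

lemma I1' (hT : ContDiff ℝ 2 T) (hS : ContDiff ℝ 2 S)
    (hTS : ∀ A, S (T A) = A) (hST : ∀ B, T (S B) = B) (B : Fin n → ℝ) (p s : Fin n) :
    ∑ i, pd p (fun x => T x i) (S B) * pd i (fun y => S y s) B = if p = s then 1 else 0 := by
  have dT : Differentiable ℝ T := hT.differentiable two_ne_zero
  have hc := pd_comp (fun y => S y s) T (S B) p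
    (((contDiff_pi.mp hS s).differentiable two_ne_zero) (T (S B))) (dT (S B))
  have hl : (fun y => S (T y) s) = fun y => y s := funext fun y => by rw [hTS]
  rw [hl, pd_proj, hST] at hc
  calc ∑ i, pd p (fun x => T x i) (S B) * pd i (fun y => S y s) B
      = ∑ i, pd i (fun y => S y s) B * pd p (fun x => T x i) (S B) :=
        Finset.sum_congr rfl fun i _ => mul_comm _ _
    _ = if s = p then 1 else 0 := hc.symm
    _ = if p = s then 1 else 0 := if_congr eq_comm rfl rfl

lemma E1 (hT : ContDiff ℝ 2 T) (hS : ContDiff ℝ 2 S)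
    (γ γt : (Fin n → ℝ) → Matrix (Fin n) (Fin n) ℝ)
    (hγ : ∀ i j, ContDiff ℝ 1 (fun A => γ A i j))
    (hγt : ∀ (B : Fin n → ℝ) (i j : Fin n),
      γt B i j = ∑ k, γ (S B) i k * pd k (fun C => T C j) (S B))
    (B : Fin n → ℝ) (i k l : Fin n) :
    pd i (fun C => γt C k l) B =
      ∑ s, (∑ m, (pd s (fun x => γ x k m) (S B) * pd m (fun x => T x l) (S B)
            + γ (S B) k m * pd s (fun x => pd m (fun y => T y l) x) (S B)))
        * pd i (fun C => S C s) B := by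
  have dS : Differentiable ℝ S := hS.differentiable two_ne_zero
  have dγ : ∀ a b, Differentiable ℝ (fun x => γ x a b) :=
    fun a b => (hγ a b).differentiable one_ne_zero
  have dJ : ∀ m : Fin n, Differentiable ℝ (fun x => pd m (fun y => T y l) x) := fun m =>
    pd_differentiable (contDiff_pi.mp hT l) m
  have dg : Differentiable ℝ (fun x => ∑ m, γ x k m * pd m (fun y => T y l) x) := by
    apply Differentiable.fun_sum
    exact fun m _ => (dγ k m).mul (dJ m)
  have hfun : (fun C => γt C k l)
      = fun C => (fun x => ∑ m, γ x k m * pd m (fun y => T y l) x) (S C) :=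
    funext fun C => hγt C k l
  rw [hfun, pd_comp _ S B i (dg (S B)) (dS B)]
  refine Finset.sum_congr rfl fun s _ => ?_
  congr 1
  rw [pd_sum Finset.univ _ (S B) s (fun m _ => ((dγ k m).fun_mul (dJ m)) (S B))]
  refine Finset.sum_congr rfl fun m _ => ?_
  rw [pd_mul _ _ _ _ ((dγ k m) (S B)) ((dJ m) (S B))]
  ring

lemma E2 (hS : ContDiff ℝ 2 S)
    (ρ ρt : (Fin n → ℝ) → Matrix (Fin n) (Fin n) ℝ)
    (hρ : ∀ i j, ContDiff ℝ 1 (fun A => ρ A i j))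
    (hρt : ∀ (B : Fin n → ℝ) (i a : Fin n),
      ρt B i a = ∑ s, pd i (fun C => S C s) B * ρ (S B) s a)
    (B : Fin n → ℝ) (l i a : Fin n) :
    pd l (fun C => ρt C i a) B =
      ∑ s, (pd i (fun C => S C s) B
            * (∑ t, pd t (fun x => ρ x s a) (S B) * pd l (fun C => S C t) B)
          + ρ (S B) s a * pd l (fun C => pd i (fun y => S y s) C) B) := by
  have dS : Differentiable ℝ S := hS.differentiable two_ne_zero
  have dK : ∀ s : Fin n, Differentiable ℝ (fun C => pd i (fun y => S y s) C) := fun s =>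
    pd_differentiable (contDiff_pi.mp hS s) i
  have dρS : ∀ s : Fin n, Differentiable ℝ (fun C => ρ (S C) s a) := fun s =>
    ((hρ s a).differentiable one_ne_zero).comp dS
  have hfun : (fun C => ρt C i a)
      = fun C => ∑ s, pd i (fun y => S y s) C * ρ (S C) s a :=
    funext fun C => hρt C i a
  rw [hfun, pd_sum Finset.univ _ B l (fun s _ => ((dK s).fun_mul (dρS s)) B)]
  refine Finset.sum_congr rfl fun s _ => ?_
  rw [pd_mul _ _ _ _ ((dK s) B) ((dρS s) B)]
  rw [pd_comp (fun x => ρ x s a) S B l (((hρ s a).differentiable one_ne_zero) (S B)) (dS B)]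

lemma I3 (hT : ContDiff ℝ 2 T) (hS : ContDiff ℝ 2 S)
    (hTS : ∀ A, S (T A) = A) (hST : ∀ B, T (S B) = B)
    (B : Fin n → ℝ) (i m t : Fin n) :
    ∑ l, ((∑ s, pd s (fun x => pd m (fun y => T y l) x) (S B) * pd i (fun C => S C s) B)
            * pd l (fun y => S y t) B
          + pd m (fun x => T x l) (S B) * pd i (fun C => pd l (fun y => S y t) C) B) = 0 := by
  have dS : Differentiable ℝ S := hS.differentiable two_ne_zero
  have dJ : ∀ l m : Fin n, Differentiable ℝ (fun x => pd m (fun y => T y l) x) := fun l m =>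
    pd_differentiable (contDiff_pi.mp hT l) m
  have dK : ∀ l t : Fin n, Differentiable ℝ (fun C => pd l (fun y => S y t) C) := fun l t =>
    pd_differentiable (contDiff_pi.mp hS t) l
  have dJS : ∀ l : Fin n, Differentiable ℝ (fun C => pd m (fun y => T y l) (S C)) :=
    fun l => (dJ l m).comp dS
  set g : (Fin n → ℝ) → ℝ :=
    fun C => ∑ l, pd m (fun y => T y l) (S C) * pd l (fun y => S y t) C with hgdef
  have hg : g = fun _ => if m = t then (1:ℝ) else 0 :=
    funext fun C => I1' T S hT hS hTS hST C m t
  have hpd0 : pd i g B = 0 := by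
    rw [hg]
    simp [pd]
  have hexp : pd i g B
      = ∑ l, (pd l (fun y => S y t) B * pd i (fun C => pd m (fun y' => T y' l) (S C)) B
          + pd m (fun y => T y l) (S B) * pd i (fun C => pd l (fun y => S y t) C) B) := by
    rw [hgdef, pd_sum Finset.univ _ B i
      (fun l _ => ((dJS l).fun_mul (dK l t)) B)]
    refine Finset.sum_congr rfl fun l _ => ?_
    rw [pd_mul _ _ _ _ ((dJS l) B) ((dK l t) B)]
    exact add_comm _ _
  have hcomp : ∀ l : Fin n, pd i (fun C => pd m (fun y' => T y' l) (S C)) B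
      = ∑ s, pd s (fun x => pd m (fun y => T y l) x) (S B) * pd i (fun C => S C s) B := fun l =>
    pd_comp (fun x => pd m (fun y => T y l) x) S B i ((dJ l m) (S B)) (dS B)
  rw [← hpd0, hexp]
  refine Finset.sum_congr rfl fun l _ => ?_
  rw [hcomp l]
  ring

end Main


end Stmt18Aux

open Stmt18Aux in
theorem stmt18 {n : ℕ} (hn : 1 ≤ n) (f : Fin n → Fin n → Fin n → ℝ)
    (hf : IsStructureConstants f)
    (γ ρ : (Fin n → ℝ) → Matrix (Fin n) (Fin n) ℝ)
    (hγ : ∀ i j, ContDiff ℝ 1 (fun A => γ A i j))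
    (hρ : ∀ i j, ContDiff ℝ 1 (fun A => ρ A i j))
    (hm1 : ∀ (A : Fin n → ℝ) (j k l : Fin n),
      ∑ i, (γ A j i * pd i (fun B => γ B k l) A - γ A k i * pd i (fun B => γ B j l) A)
        = ∑ i, γ A i l * f j k i)
    (hm2 : ∀ (A : Fin n → ℝ) (i j a : Fin n),
      ∑ l, (γ A j l * pd l (fun B => ρ B i a) A + ρ A l a * pd i (fun B => γ B j l) A) = 0)
    (T S : (Fin n → ℝ) → (Fin n → ℝ))
    (hT : ContDiff ℝ 2 T) (hS : ContDiff ℝ 2 S)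
    (hTS : ∀ A, S (T A) = A) (hST : ∀ B, T (S B) = B)
    (γt ρt : (Fin n → ℝ) → Matrix (Fin n) (Fin n) ℝ)
    (hγt : ∀ (B : Fin n → ℝ) (i j : Fin n),
      γt B i j = ∑ k, γ (S B) i k * pd k (fun C => T C j) (S B))
    (hρt : ∀ (B : Fin n → ℝ) (i a : Fin n),
      ρt B i a = ∑ s, pd i (fun C => S C s) B * ρ (S B) s a) :
    (∀ (B : Fin n → ℝ) (j k l : Fin n),
      ∑ i, (γt B j i * pd i (fun C => γt C k l) B - γt B k i * pd i (fun C => γt C j l) B)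
        = ∑ i, γt B i l * f j k i) ∧
    (∀ (B : Fin n → ℝ) (i j a : Fin n),
      ∑ l, (γt B j l * pd l (fun C => ρt C i a) B + ρt B l a * pd i (fun C => γt C j l) B)
        = 0) := by
  constructor
  · intro B j k l
    have hI : ∀ p s : Fin n,
        ∑ i2, pd p (fun x => T x i2) (S B) * pd i2 (fun y => S y s) B
          = if p = s then 1 else 0 := fun p s => I1' T S hT hS hTS hST B p s
    have hH : ∀ l' p m : Fin n,
        pd p (fun x => pd m (fun y => T y l') x) (S B)
          = pd m (fun x => pd p (fun y => T y l') x) (S B) :=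
      fun l' p m => pd_symm (contDiff_pi.mp hT l') p m (S B)
    have key := alg1 f (fun a b => γ (S B) a b)
      (fun p i2 => pd p (fun x => T x i2) (S B))
      (fun i2 s => pd i2 (fun y => S y s) B)
      (fun s a m => pd s (fun x => γ x a m) (S B))
      (fun l' s m => pd s (fun x => pd m (fun y => T y l') x) (S B))
      hI hH (fun j' k' m => hm1 (S B) j' k' m) j k l
    calc ∑ i, (γt B j i * pd i (fun C => γt C k l) B - γt B k i * pd i (fun C => γt C j l) B)
        = ∑ i, ((∑ p, γ (S B) j p * pd p (fun x => T x i) (S B))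
              * (∑ s, (∑ m, (pd s (fun x => γ x k m) (S B) * pd m (fun x => T x l) (S B)
                  + γ (S B) k m * pd s (fun x => pd m (fun y => T y l) x) (S B)))
                * pd i (fun C => S C s) B)
            - (∑ p, γ (S B) k p * pd p (fun x => T x i) (S B))
              * (∑ s, (∑ m, (pd s (fun x => γ x j m) (S B) * pd m (fun x => T x l) (S B)
                  + γ (S B) j m * pd s (fun x => pd m (fun y => T y l) x) (S B)))
                * pd i (fun C => S C s) B)) := by
          refine Finset.sum_congr rfl fun i _ => ?_
          rw [hγt B j i, hγt B k i, E1 T S hT hS γ γt hγ hγt B i k l,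
            E1 T S hT hS γ γt hγ hγt B i j l]
      _ = ∑ i, (∑ p, γ (S B) i p * pd p (fun x => T x l) (S B)) * f j k i := key
      _ = ∑ i, γt B i l * f j k i :=
          Finset.sum_congr rfl fun i _ => by rw [← hγt B i l]
  · intro B i j a
    have hI : ∀ p s : Fin n,
        ∑ l, pd p (fun x => T x l) (S B) * pd l (fun y => S y s) B
          = if p = s then 1 else 0 := fun p s => I1' T S hT hS hTS hST B p s
    have hI3' : ∀ m t : Fin n,
        ∑ l, ((∑ s, pd s (fun x => pd m (fun y => T y l) x) (S B) * pd i (fun C => S C s) B)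
              * pd l (fun C => S C t) B
            + pd m (fun x => T x l) (S B) * pd l (fun C => pd i (fun y => S y t) C) B)
          = 0 := fun m t => by
      have h := I3 T S hT hS hTS hST B i m t
      calc ∑ l, ((∑ s, pd s (fun x => pd m (fun y => T y l) x) (S B)
                * pd i (fun C => S C s) B) * pd l (fun C => S C t) B
              + pd m (fun x => T x l) (S B) * pd l (fun C => pd i (fun y => S y t) C) B)
          = ∑ l, ((∑ s, pd s (fun x => pd m (fun y => T y l) x) (S B)
                * pd i (fun C => S C s) B) * pd l (fun y => S y t) B
              + pd m (fun x => T x l) (S B) * pd i (fun C => pd l (fun y => S y t) C) B) := by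
            refine Finset.sum_congr rfl fun l _ => ?_
            rw [pd_symm (contDiff_pi.mp hS t) l i B]
        _ = 0 := h
    have key := alg2 (fun p => γ (S B) j p) (fun s => ρ (S B) s a)
      (fun m l' => pd m (fun x => T x l') (S B))
      (fun x y => pd x (fun C => S C y) B)
      (fun t s => pd t (fun x => ρ x s a) (S B))
      (fun s m => pd s (fun x => γ x j m) (S B))
      (fun l' s => pd l' (fun C => pd i (fun y => S y s) C) B)
      (fun l' s m => pd s (fun x => pd m (fun y => T y l') x) (S B))
      i hI (fun s => hm2 (S B) s j a) hI3'
    calc ∑ l, (γt B j l * pd l (fun C => ρt C i a) B + ρt B l a * pd i (fun C => γt C j l) B)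
        = ∑ l, ((∑ p, γ (S B) j p * pd p (fun x => T x l) (S B))
              * (∑ s, (pd i (fun C => S C s) B
                  * (∑ t, pd t (fun x => ρ x s a) (S B) * pd l (fun C => S C t) B)
                + ρ (S B) s a * pd l (fun C => pd i (fun y => S y s) C) B))
            + (∑ t, pd l (fun C => S C t) B * ρ (S B) t a)
              * (∑ s, (∑ m, (pd s (fun x => γ x j m) (S B) * pd m (fun x => T x l) (S B)
                  + γ (S B) j m * pd s (fun x => pd m (fun y => T y l) x) (S B)))
                * pd i (fun C => S C s) B)) := by
          refine Finset.sum_congr rfl fun l _ => ?_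
          rw [hγt B j l, hρt B l a, E2 S hS ρ ρt hρ hρt B l i a,
            E1 T S hT hS γ γt hγ hγt B i j l]
      _ = 0 := key
end
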